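/- Uniqueness of the derived conclusion set: Let D be a basic defeasible theory with duplicated strict rules (interpreted with separated reasoning). If D derives C₁ and D derives C₂ (possibly via different maximal transition sequences), then C₁ = C₂. -/
import Mathlib


/-- A propositional literal: an atom or its negation. -/
inductive Lit where
  | pos : ℕ → Lit
  | neg : ℕ → Lit
deriving DecidableEq

/-- The complement ~q of a literal q. -/
def Lit.compl : Lit → Lit
  | .pos n => .neg n
  | .neg n => .pos n

/-- The atom underlying a literal. -/
def Lit.atom : Lit → ℕ
  | .pos n => n
  | .neg n => n

/-- The three kinds of rules: strict (→), defeasible (⇒), defeater (⇝). -/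
inductive RuleKind where
  | strict | defeasible | defeater
deriving DecidableEq

/-- A rule: a finite body of literals, a head literal, and a kind. -/
structure Rule where
  body : Finset Lit
  head : Lit
  kind : RuleKind
deriving DecidableEq

/-- A propositional defeasible theory: finite facts, finite rules, and an
acyclic superiority relation on rules. -/
structure DTheory where
  facts : Finset Lit
  rules : Finset Rule
  sup : Rule → Rule → Prop
  sup_acyclic : ∀ r, ¬ Relation.TransGen sup r r

/-- Tagged literals (extended conclusions): tags ±Δ, ±∂, ±σ. -/
inductive TaggedLit where
  | pDelta : Lit → TaggedLit
  | mDelta : Lit → TaggedLit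
  | pPartial : Lit → TaggedLit
  | mPartial : Lit → TaggedLit
  | pSigma : Lit → TaggedLit
  | mSigma : Lit → TaggedLit
deriving DecidableEq

/-- The literal of a tagged literal. -/
def TaggedLit.lit : TaggedLit → Lit
  | .pDelta q => q
  | .mDelta q => q
  | .pPartial q => q
  | .mPartial q => q
  | .pSigma q => q
  | .mSigma q => q

/-- Tagged literals whose tag is among +Δ, −Δ, +∂, −∂ (conclusions proper). -/
def TaggedLit.IsConclusionTag : TaggedLit → Prop
  | .pDelta _ => True
  | .mDelta _ => True
  | .pPartial _ => True
  | .mPartial _ => True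
  | .pSigma _ => False
  | .mSigma _ => False

/-- R_s[q]: strict rules with head q. -/
def DTheory.Rs (D : DTheory) (q : Lit) : Set Rule :=
  {r | r ∈ D.rules ∧ r.kind = RuleKind.strict ∧ r.head = q}

/-- R_sd[q]: strict and defeasible rules with head q. -/
def DTheory.Rsd (D : DTheory) (q : Lit) : Set Rule :=
  {r | r ∈ D.rules ∧ r.kind ≠ RuleKind.defeater ∧ r.head = q}

/-- R_d[q]: defeasible rules with head q. -/
def DTheory.Rd (D : DTheory) (q : Lit) : Set Rule :=
  {r | r ∈ D.rules ∧ r.kind = RuleKind.defeasible ∧ r.head = q}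

/-- R[q]: all rules with head q. -/
def DTheory.Rall (D : DTheory) (q : Lit) : Set Rule :=
  {r | r ∈ D.rules ∧ r.head = q}

/-- The rules used for defeasible provability (tags ±∂, ±σ): under separated
reasoning (`sep = true`) these are the defeasible rules R_d[q]; under the
standard interpretation (`sep = false`) they are R_sd[q]. -/
def DTheory.RD (D : DTheory) (sep : Bool) (q : Lit) : Set Rule :=
  if sep then D.Rd q else D.Rsd q

/-- `Step sep D S c` holds iff the tagged literal `c` may be appended to a
derivation in `D` whose set of preceding lines is `S`, by one of the inference
rules (±Δ, ±∂, ±σ).  `sep` selects separated reasoning. -/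
inductive Step (sep : Bool) (D : DTheory) (S : Set TaggedLit) : TaggedLit → Prop
  | plusDelta (q : Lit) :
      (q ∈ D.facts ∨ ∃ r ∈ D.Rs q, ∀ a ∈ r.body, TaggedLit.pDelta a ∈ S) →
      Step sep D S (TaggedLit.pDelta q)
  | minusDelta (q : Lit) :
      q ∉ D.facts →
      (∀ r ∈ D.Rs q, ∃ a ∈ r.body, TaggedLit.mDelta a ∈ S) →
      Step sep D S (TaggedLit.mDelta q)
  | plusPartial (q : Lit) :
      (TaggedLit.pDelta q ∈ S ∨
        ((∃ r ∈ D.RD sep q, ∀ a ∈ r.body, TaggedLit.pPartial a ∈ S) ∧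
         TaggedLit.mDelta q.compl ∈ S ∧
         (∀ s ∈ D.Rall q.compl,
            (∃ a ∈ s.body, TaggedLit.mPartial a ∈ S) ∨
            (∃ t ∈ D.RD sep q, D.sup t s ∧ ∀ a ∈ t.body, TaggedLit.pPartial a ∈ S)))) →
      Step sep D S (TaggedLit.pPartial q)
  | minusPartial (q : Lit) :
      TaggedLit.mDelta q ∈ S →
      ((∀ r ∈ D.RD sep q, ∃ a ∈ r.body, TaggedLit.mPartial a ∈ S) ∨
       TaggedLit.pDelta q.compl ∈ S ∨
       (∃ s ∈ D.Rall q.compl,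
          (∀ a ∈ s.body, TaggedLit.pPartial a ∈ S) ∧
          (∀ t ∈ D.RD sep q,
             (∃ a ∈ t.body, TaggedLit.mPartial a ∈ S) ∨ ¬ D.sup t s))) →
      Step sep D S (TaggedLit.mPartial q)
  | plusSigma (q : Lit) :
      (∃ r ∈ D.RD sep q, ∀ a ∈ r.body, TaggedLit.pPartial a ∈ S) →
      Step sep D S (TaggedLit.pSigma q)
  | minusSigma (q : Lit) :
      (∀ r ∈ D.RD sep q, ∃ a ∈ r.body, TaggedLit.mPartial a ∈ S) →
      Step sep D S (TaggedLit.mSigma q)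

/-- Derivations: finite sequences of tagged literals, each justified by its
predecessors via the inference rules. -/
inductive IsDerivation (sep : Bool) (D : DTheory) : List TaggedLit → Prop
  | nil : IsDerivation sep D []
  | snoc (P : List TaggedLit) (c : TaggedLit) :
      IsDerivation sep D P → Step sep D {x | x ∈ P} c →
      IsDerivation sep D (P ++ [c])

/-- D ⊢ c : the tagged literal c occurs in some derivation in D. -/
def Proves (sep : Bool) (D : DTheory) (c : TaggedLit) : Prop :=
  ∃ P, IsDerivation sep D P ∧ c ∈ P

/-- A basic defeasible theory: no defeaters and an empty superiority relation. -/
def DTheory.Basic (D : DTheory) : Prop :=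
  (∀ r ∈ D.rules, r.kind ≠ RuleKind.defeater) ∧ (∀ r s : Rule, ¬ D.sup r s)

/-- D has duplicated strict rules: every strict rule has a defeasible copy. -/
def DTheory.DupStrictRules (D : DTheory) : Prop :=
  ∀ r ∈ D.rules, r.kind = RuleKind.strict →
    Rule.mk r.body r.head RuleKind.defeasible ∈ D.rules

/-- The literals of the (finite) language of D: all literals over atoms
occurring in D. -/
def DTheory.lits (D : DTheory) : Set Lit :=
  {l | (∃ f ∈ D.facts, f.atom = l.atom) ∨
       ∃ r ∈ D.rules, r.head.atom = l.atom ∨ ∃ a ∈ r.body, a.atom = l.atom}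

/-- The transition system on states (D, C).  `L` is the set of literals of the
language of the original theory, over which q ranges in transitions (1)–(6). -/
inductive DLTrans (L : Set Lit) : DTheory × Set TaggedLit → DTheory × Set TaggedLit → Prop
  | t1 (D : DTheory) (C : Set TaggedLit) (q : Lit) :
      q ∈ L →
      (q ∈ D.facts ∨
        ∃ r ∈ D.rules, r.kind = RuleKind.strict ∧ r.head = q ∧ r.body = ∅) →
      DLTrans L (D, C)
        (D, C ∪ {TaggedLit.pDelta q, TaggedLit.pPartial q, TaggedLit.pSigma q})
  | t2 (D : DTheory) (C : Set TaggedLit) (q : Lit) :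
      q ∈ L →
      (∃ r ∈ D.rules, r.kind = RuleKind.defeasible ∧ r.head = q ∧ r.body = ∅) →
      DLTrans L (D, C) (D, insert (TaggedLit.pSigma q) C)
  | t3 (D : DTheory) (C : Set TaggedLit) (q : Lit) :
      q ∈ L →
      (∀ r ∈ D.rules, ¬(r.kind = RuleKind.strict ∧ r.head = q)) →
      q ∉ D.facts →
      DLTrans L (D, C) (D, insert (TaggedLit.mDelta q) C)
  | t4 (D : DTheory) (C : Set TaggedLit) (q : Lit) :
      q ∈ L →
      (∀ r ∈ D.rules, r.head ≠ q) →
      DLTrans L (D, C) (D, insert (TaggedLit.mSigma q) C)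
  | t5 (D : DTheory) (C : Set TaggedLit) (q : Lit) :
      q ∈ L →
      (TaggedLit.pDelta q ∈ C ∨
        (TaggedLit.pSigma q ∈ C ∧ TaggedLit.mDelta q.compl ∈ C ∧
         TaggedLit.mSigma q.compl ∈ C)) →
      DLTrans L (D, C) (D, insert (TaggedLit.pPartial q) C)
  | t6 (D : DTheory) (C : Set TaggedLit) (q : Lit) :
      q ∈ L →
      TaggedLit.mDelta q ∈ C →
      (TaggedLit.pDelta q.compl ∈ C ∨ TaggedLit.pSigma q.compl ∈ C ∨
       TaggedLit.mSigma q ∈ C) →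
      DLTrans L (D, C) (D, insert (TaggedLit.mPartial q) C)
  | t7 (D : DTheory) (C : Set TaggedLit) (r : Rule) (q : Lit) :
      r ∈ D.rules → r.kind = RuleKind.strict → q ∈ r.body →
      TaggedLit.pDelta q ∈ C →
      DLTrans L (D, C)
        (⟨D.facts, insert (Rule.mk (r.body.erase q) r.head r.kind) (D.rules.erase r),
          D.sup, D.sup_acyclic⟩, C)
  | t8 (D : DTheory) (C : Set TaggedLit) (r : Rule) (q : Lit) :
      r ∈ D.rules → r.kind = RuleKind.defeasible → q ∈ r.body →
      TaggedLit.pPartial q ∈ C →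
      DLTrans L (D, C)
        (⟨D.facts, insert (Rule.mk (r.body.erase q) r.head r.kind) (D.rules.erase r),
          D.sup, D.sup_acyclic⟩, C)
  | t9 (D : DTheory) (C : Set TaggedLit) (r : Rule) (q : Lit) :
      r ∈ D.rules → r.kind = RuleKind.strict → q ∈ r.body →
      TaggedLit.mDelta q ∈ C →
      DLTrans L (D, C) (⟨D.facts, D.rules.erase r, D.sup, D.sup_acyclic⟩, C)
  | t10 (D : DTheory) (C : Set TaggedLit) (r : Rule) (q : Lit) :
      r ∈ D.rules → r.kind = RuleKind.defeasible → q ∈ r.body →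
      TaggedLit.mPartial q ∈ C →
      DLTrans L (D, C) (⟨D.facts, D.rules.erase r, D.sup, D.sup_acyclic⟩, C)

/-- (D, C) ⟹̸ : every applicable transition leaves the state unchanged. -/
def Stuck (L : Set Lit) (s : DTheory × Set TaggedLit) : Prop :=
  ∀ s', DLTrans L s s' → s' = s

/-- D derives C: some transition sequence from (D, ∅) reaches a stuck state
(D', C'), and C is the set of members of C' with tags among +Δ, −Δ, +∂, −∂. -/
def Derives (D : DTheory) (C : Set TaggedLit) : Prop :=
  ∃ D' C', Relation.ReflTransGen (DLTrans D.lits) (D, (∅ : Set TaggedLit)) (D', C') ∧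
    Stuck D.lits (D', C') ∧
    C = {c | c ∈ C' ∧ c.IsConclusionTag}

section Uniqueness

/-- The positive tag appropriate to a rule kind (Δ for strict, ∂ otherwise). -/
def ruposTag : RuleKind → Lit → TaggedLit
  | RuleKind.strict => TaggedLit.pDelta
  | _ => TaggedLit.pPartial

/-- The negative tag appropriate to a rule kind. -/
def runegTag : RuleKind → Lit → TaggedLit
  | RuleKind.strict => TaggedLit.mDelta
  | _ => TaggedLit.mPartial

/-- Invariant of states `(E, C)` reachable from `(D, ∅)`. -/
structure TInv (D E : DTheory) (C : Set TaggedLit) : Prop where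
  facts_eq : E.facts = D.facts
  ruleB : ∀ s ∈ E.rules, ∃ r ∈ D.rules, s.kind = r.kind ∧ s.head = r.head ∧
      s.body ⊆ r.body ∧ ∀ a ∈ r.body, a ∉ s.body → ruposTag r.kind a ∈ C
  ruleC : ∀ r ∈ D.rules,
      (∃ s ∈ E.rules, s.kind = r.kind ∧ s.head = r.head ∧ s.body ⊆ r.body ∧
        ∀ a ∈ r.body, a ∉ s.body → ruposTag r.kind a ∈ C) ∨
      (∃ a ∈ r.body, runegTag r.kind a ∈ C)
  i1 : ∀ q, TaggedLit.pDelta q ∈ C → q ∈ D.facts ∨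
      ∃ s ∈ E.rules, s.kind = RuleKind.strict ∧ s.head = q ∧ s.body = ∅
  i2 : ∀ q, TaggedLit.mDelta q ∈ C → q ∉ D.facts ∧
      ∀ s ∈ E.rules, ¬(s.kind = RuleKind.strict ∧ s.head = q)
  i3 : ∀ q, TaggedLit.pSigma q ∈ C → q ∈ D.facts ∨ ∃ s ∈ E.rules, s.head = q ∧ s.body = ∅
  i4 : ∀ q, TaggedLit.mSigma q ∈ C → ∀ s ∈ E.rules, s.head ≠ q
  i6 : ∀ q, TaggedLit.pPartial q ∈ C → TaggedLit.pDelta q ∈ C ∨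
      (TaggedLit.pSigma q ∈ C ∧ TaggedLit.mDelta q.compl ∈ C ∧ TaggedLit.mSigma q.compl ∈ C)
  i7 : ∀ q, TaggedLit.mPartial q ∈ C → TaggedLit.mDelta q ∈ C ∧
      (TaggedLit.pDelta q.compl ∈ C ∨ TaggedLit.pSigma q.compl ∈ C ∨ TaggedLit.mSigma q ∈ C)

lemma delta_consis {D E C} (h : TInv D E C) {q} (hp : TaggedLit.pDelta q ∈ C)
    (hm : TaggedLit.mDelta q ∈ C) : False := by
  obtain ⟨hnf, hns⟩ := h.i2 q hm
  rcases h.i1 q hp with hf | ⟨s, hs, hk, hh, _⟩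
  · exact hnf hf
  · exact hns s hs ⟨hk, hh⟩

lemma partial_consis {D E C} (h : TInv D E C) {q} (hp : TaggedLit.pPartial q ∈ C)
    (hm : TaggedLit.mPartial q ∈ C) : False := by
  obtain ⟨hmD, hdisj⟩ := h.i7 q hm
  obtain ⟨hnf, hns⟩ := h.i2 q hmD
  rcases h.i6 q hp with hpD | ⟨hpS, hmDc, hmSc⟩
  · exact delta_consis h hpD hmD
  · obtain ⟨hnfc, hnsc⟩ := h.i2 q.compl hmDc
    rcases hdisj with hpDc | hpSc | hmS
    · rcases h.i1 q.compl hpDc with hf | ⟨s, hs, hk, hh, _⟩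
      · exact hnfc hf
      · exact hnsc s hs ⟨hk, hh⟩
    · rcases h.i3 q.compl hpSc with hf | ⟨s, hs, hh, _⟩
      · exact hnfc hf
      · exact h.i4 q.compl hmSc s hs hh
    · rcases h.i3 q hpS with hf | ⟨s, hs, hh, _⟩
      · exact hnf hf
      · exact h.i4 q hmS s hs hh

lemma inv_init (D : DTheory) : TInv D D ∅ where
  facts_eq := rfl
  ruleB := fun s hs => ⟨s, hs, rfl, rfl, le_refl _, fun a _ ha' => absurd ‹a ∈ s.body› ha'⟩
  ruleC := fun r hr => Or.inl ⟨r, hr, rfl, rfl, le_refl _, fun a ha ha' => absurd ha ha'⟩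
  i1 := fun q h => absurd h (Set.notMem_empty _)
  i2 := fun q h => absurd h (Set.notMem_empty _)
  i3 := fun q h => absurd h (Set.notMem_empty _)
  i4 := fun q h => absurd h (Set.notMem_empty _)
  i6 := fun q h => absurd h (Set.notMem_empty _)
  i7 := fun q h => absurd h (Set.notMem_empty _)

/-- Adding new tagged literals to `C` preserves the invariant, provided each
new tagged literal satisfies the corresponding condition. -/
lemma TInv.addC {D E C} (h : TInv D E C) (A : Set TaggedLit)
    (h1 : ∀ q, TaggedLit.pDelta q ∈ A → q ∈ D.facts ∨
      ∃ s ∈ E.rules, s.kind = RuleKind.strict ∧ s.head = q ∧ s.body = ∅)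
    (h2 : ∀ q, TaggedLit.mDelta q ∈ A → q ∉ D.facts ∧
      ∀ s ∈ E.rules, ¬(s.kind = RuleKind.strict ∧ s.head = q))
    (h3 : ∀ q, TaggedLit.pSigma q ∈ A → q ∈ D.facts ∨ ∃ s ∈ E.rules, s.head = q ∧ s.body = ∅)
    (h4 : ∀ q, TaggedLit.mSigma q ∈ A → ∀ s ∈ E.rules, s.head ≠ q)
    (h6 : ∀ q, TaggedLit.pPartial q ∈ A → TaggedLit.pDelta q ∈ C ∪ A ∨
      (TaggedLit.pSigma q ∈ C ∪ A ∧ TaggedLit.mDelta q.compl ∈ C ∪ A ∧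
        TaggedLit.mSigma q.compl ∈ C ∪ A))
    (h7 : ∀ q, TaggedLit.mPartial q ∈ A → TaggedLit.mDelta q ∈ C ∪ A ∧
      (TaggedLit.pDelta q.compl ∈ C ∪ A ∨ TaggedLit.pSigma q.compl ∈ C ∪ A ∨
        TaggedLit.mSigma q ∈ C ∪ A)) :
    TInv D E (C ∪ A) where
  facts_eq := h.facts_eq
  ruleB := by
    intro s hs
    obtain ⟨r, hr, hk, hh, hsub, hmiss⟩ := h.ruleB s hs
    exact ⟨r, hr, hk, hh, hsub, fun a ha ha' => Or.inl (hmiss a ha ha')⟩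
  ruleC := by
    intro r hr
    rcases h.ruleC r hr with ⟨s, hs, hk, hh, hsub, hmiss⟩ | ⟨a, ha, hneg⟩
    · exact Or.inl ⟨s, hs, hk, hh, hsub, fun a ha ha' => Or.inl (hmiss a ha ha')⟩
    · exact Or.inr ⟨a, ha, Or.inl hneg⟩
  i1 := fun q hq => hq.elim (h.i1 q) (h1 q)
  i2 := fun q hq => hq.elim (h.i2 q) (h2 q)
  i3 := fun q hq => hq.elim (h.i3 q) (h3 q)
  i4 := fun q hq => hq.elim (h.i4 q) (h4 q)
  i6 := fun q hq => hq.elim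
    (fun hc => (h.i6 q hc).imp Or.inl (fun ⟨a, b, c⟩ => ⟨Or.inl a, Or.inl b, Or.inl c⟩))
    (h6 q)
  i7 := fun q hq => hq.elim
    (fun hc => ⟨Or.inl (h.i7 q hc).1, (h.i7 q hc).2.imp Or.inl
      (fun x => x.imp Or.inl Or.inl)⟩)
    (h7 q)

lemma inv_shrink {D E C} {s : Rule} {q : Lit} (h : TInv D E C) (hs : s ∈ E.rules)
    (hq : q ∈ s.body) (hc : ruposTag s.kind q ∈ C) :
    TInv D ⟨E.facts, insert (Rule.mk (s.body.erase q) s.head s.kind) (E.rules.erase s),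
      E.sup, E.sup_acyclic⟩ C := by
  set s'' : Rule := Rule.mk (s.body.erase q) s.head s.kind with hs''
  have hwit : ∃ r ∈ D.rules, s''.kind = r.kind ∧ s''.head = r.head ∧
      s''.body ⊆ r.body ∧ ∀ a ∈ r.body, a ∉ s''.body → ruposTag r.kind a ∈ C := by
    obtain ⟨r, hr, hk, hh, hsub, hmiss⟩ := h.ruleB s hs
    refine ⟨r, hr, hk, hh, (Finset.erase_subset _ _).trans hsub, ?_⟩
    intro a ha ha'
    by_cases haq : a = q
    · subst haq; rw [← hk]; exact hc
    · refine hmiss a ha (fun hmem => ha' ?_)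
      exact Finset.mem_erase.mpr ⟨haq, hmem⟩
  constructor
  · exact h.facts_eq
  · intro t ht
    rcases Finset.mem_insert.mp ht with rfl | ht'
    · exact hwit
    · exact h.ruleB t (Finset.mem_of_mem_erase ht')
  · intro r hr
    rcases h.ruleC r hr with ⟨s₀, hs₀, hk, hh, hsub, hmiss⟩ | hneg
    · by_cases hss : s₀ = s
      · subst hss
        obtain ⟨r', hr', hk', hh', hsub', hmiss'⟩ := hwit
        left
        refine ⟨s'', Finset.mem_insert_self _ _, hk.trans ?_ , hh.trans ?_, ?_, ?_⟩
        · rfl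
        · rfl
        · exact ((Finset.erase_subset _ _).trans hsub)
        · intro a ha ha'
          by_cases haq : a = q
          · subst haq; rw [← hk]; exact hc
          · exact hmiss a ha (fun hmem => ha' (Finset.mem_erase.mpr ⟨haq, hmem⟩))
      · exact Or.inl ⟨s₀, Finset.mem_insert_of_mem (Finset.mem_erase.mpr ⟨hss, hs₀⟩),
          hk, hh, hsub, hmiss⟩
    · exact Or.inr hneg
  · intro q₀ hq₀
    rcases h.i1 q₀ hq₀ with hf | ⟨s₀, hs₀, hk₀, hh₀, hb₀⟩
    · exact Or.inl hf
    · have hne : s₀ ≠ s := fun he => by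
        subst he; rw [hb₀] at hq; exact absurd hq (Finset.notMem_empty q)
      exact Or.inr ⟨s₀, Finset.mem_insert_of_mem (Finset.mem_erase.mpr ⟨hne, hs₀⟩),
        hk₀, hh₀, hb₀⟩
  · intro q₀ hq₀
    obtain ⟨hnf, hns⟩ := h.i2 q₀ hq₀
    refine ⟨hnf, ?_⟩
    intro t ht
    rcases Finset.mem_insert.mp ht with rfl | ht'
    · exact hns s hs
    · exact hns t (Finset.mem_of_mem_erase ht')
  · intro q₀ hq₀
    rcases h.i3 q₀ hq₀ with hf | ⟨s₀, hs₀, hh₀, hb₀⟩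
    · exact Or.inl hf
    · have hne : s₀ ≠ s := fun he => by
        subst he; rw [hb₀] at hq; exact absurd hq (Finset.notMem_empty q)
      exact Or.inr ⟨s₀, Finset.mem_insert_of_mem (Finset.mem_erase.mpr ⟨hne, hs₀⟩),
        hh₀, hb₀⟩
  · intro q₀ hq₀ t ht
    rcases Finset.mem_insert.mp ht with rfl | ht'
    · exact h.i4 q₀ hq₀ s hs
    · exact h.i4 q₀ hq₀ t (Finset.mem_of_mem_erase ht')
  · exact h.i6
  · exact h.i7

lemma inv_delete {D E C} {s : Rule} {q : Lit} (h : TInv D E C) (hs : s ∈ E.rules)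
    (hq : q ∈ s.body) (hc : runegTag s.kind q ∈ C) :
    TInv D ⟨E.facts, E.rules.erase s, E.sup, E.sup_acyclic⟩ C := by
  constructor
  · exact h.facts_eq
  · intro t ht
    exact h.ruleB t (Finset.mem_of_mem_erase ht)
  · intro r hr
    rcases h.ruleC r hr with ⟨s₀, hs₀, hk, hh, hsub, hmiss⟩ | hneg
    · by_cases hss : s₀ = s
      · subst hss
        exact Or.inr ⟨q, hsub hq, by rw [← hk]; exact hc⟩
      · exact Or.inl ⟨s₀, Finset.mem_erase.mpr ⟨hss, hs₀⟩, hk, hh, hsub, hmiss⟩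
    · exact Or.inr hneg
  · intro q₀ hq₀
    rcases h.i1 q₀ hq₀ with hf | ⟨s₀, hs₀, hk₀, hh₀, hb₀⟩
    · exact Or.inl hf
    · have hne : s₀ ≠ s := fun he => by
        subst he; rw [hb₀] at hq; exact absurd hq (Finset.notMem_empty q)
      exact Or.inr ⟨s₀, Finset.mem_erase.mpr ⟨hne, hs₀⟩, hk₀, hh₀, hb₀⟩
  · intro q₀ hq₀
    obtain ⟨hnf, hns⟩ := h.i2 q₀ hq₀
    exact ⟨hnf, fun t ht => hns t (Finset.mem_of_mem_erase ht)⟩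
  · intro q₀ hq₀
    rcases h.i3 q₀ hq₀ with hf | ⟨s₀, hs₀, hh₀, hb₀⟩
    · exact Or.inl hf
    · have hne : s₀ ≠ s := fun he => by
        subst he; rw [hb₀] at hq; exact absurd hq (Finset.notMem_empty q)
      exact Or.inr ⟨s₀, Finset.mem_erase.mpr ⟨hne, hs₀⟩, hh₀, hb₀⟩
  · intro q₀ hq₀ t ht
    exact h.i4 q₀ hq₀ t (Finset.mem_of_mem_erase ht)
  · exact h.i6
  · exact h.i7

lemma inv_step {D L E C E' C'} (h : TInv D E C) (t : DLTrans L (E, C) (E', C')) :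
    TInv D E' C' := by
  cases t with
  | t1 _ _ q hqL hcond =>
    have hcond' : q ∈ D.facts ∨
        ∃ s ∈ E.rules, s.kind = RuleKind.strict ∧ s.head = q ∧ s.body = ∅ := by
      rcases hcond with hf | ⟨r, hr, hk, hh, hb⟩
      · exact Or.inl (h.facts_eq ▸ hf)
      · exact Or.inr ⟨r, hr, hk, hh, hb⟩
    refine h.addC _ ?_ ?_ ?_ ?_ ?_ ?_ <;> intro q' hq' <;>
      simp only [Set.mem_insert_iff, Set.mem_singleton_iff] at hq' <;>
      rcases hq' with h' | h' | h' <;> cases h'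
    · exact hcond'
    · exact hcond'.imp id (fun ⟨s, hs, _, hh, hb⟩ => ⟨s, hs, hh, hb⟩)
    · exact Or.inl (by simp)
  | t2 _ _ q hqL hcond =>
    rw [Set.insert_eq, Set.union_comm]
    refine h.addC _ ?_ ?_ ?_ ?_ ?_ ?_ <;> intro q' hq' <;>
      simp only [Set.mem_singleton_iff] at hq' <;> cases hq'
    obtain ⟨r, hr, _, hh, hb⟩ := hcond
    exact Or.inr ⟨r, hr, hh, hb⟩
  | t3 _ _ q hqL hnr hnf =>
    rw [Set.insert_eq, Set.union_comm]
    refine h.addC _ ?_ ?_ ?_ ?_ ?_ ?_ <;> intro q' hq' <;>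
      simp only [Set.mem_singleton_iff] at hq' <;> cases hq'
    exact ⟨h.facts_eq ▸ hnf, fun s hs hks => hnr s hs hks⟩
  | t4 _ _ q hqL hnr =>
    rw [Set.insert_eq, Set.union_comm]
    refine h.addC _ ?_ ?_ ?_ ?_ ?_ ?_ <;> intro q' hq' <;>
      simp only [Set.mem_singleton_iff] at hq' <;> cases hq'
    exact hnr
  | t5 _ _ q hqL hcond =>
    rw [Set.insert_eq, Set.union_comm]
    refine h.addC _ ?_ ?_ ?_ ?_ ?_ ?_ <;> intro q' hq' <;>
      simp only [Set.mem_singleton_iff] at hq' <;> cases hq'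
    exact hcond.imp (fun x => Or.inl x)
      (fun ⟨a, b, c⟩ => ⟨Or.inl a, Or.inl b, Or.inl c⟩)
  | t6 _ _ q hqL hm hcond =>
    rw [Set.insert_eq, Set.union_comm]
    refine h.addC _ ?_ ?_ ?_ ?_ ?_ ?_ <;> intro q' hq' <;>
      simp only [Set.mem_singleton_iff] at hq' <;> cases hq'
    exact ⟨Or.inl hm, hcond.imp Or.inl (fun x => x.imp Or.inl Or.inl)⟩
  | t7 _ _ s q hs hk hq hc =>
    exact inv_shrink h hs hq (by rw [hk]; exact hc)
  | t8 _ _ s q hs hk hq hc =>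
    exact inv_shrink h hs hq (by rw [hk]; exact hc)
  | t9 _ _ s q hs hk hq hc =>
    exact inv_delete h hs hq (by rw [hk]; exact hc)
  | t10 _ _ s q hs hk hq hc =>
    exact inv_delete h hs hq (by rw [hk]; exact hc)

lemma stuck_rule_aux {L} {F : DTheory} {K} {F' : DTheory}
    (hstuck : Stuck L (F, K)) (t : DLTrans L (F, K) (F', K)) : F'.rules = F.rules := by
  have h := hstuck _ t
  have h1 : F' = F := congrArg Prod.fst h
  exact congrArg DTheory.rules h1

lemma stuck_pos {L} {F : DTheory} {K} (hstuck : Stuck L (F, K)) {s : Rule} {q : Lit}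
    (hs : s ∈ F.rules) (hnd : s.kind ≠ RuleKind.defeater) (hq : q ∈ s.body)
    (hc : ruposTag s.kind q ∈ K) : False := by
  have hmain : ∀ F' : DTheory,
      F'.rules = insert (Rule.mk (s.body.erase q) s.head s.kind) (F.rules.erase s) →
      F'.rules = F.rules → False := by
    intro F' he hr
    have hmem := hs
    rw [← hr, he] at hmem
    rcases Finset.mem_insert.mp hmem with he' | hm
    · have hb := congrArg Rule.body he'
      rw [hb] at hq
      exact Finset.notMem_erase q s.body hq
    · exact (Finset.mem_erase.mp hm).1 rfl
  rcases hk : s.kind with _ | _ | _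
  · rw [hk] at hc
    exact hmain _ rfl (stuck_rule_aux hstuck (DLTrans.t7 F K s q hs hk hq hc))
  · rw [hk] at hc
    exact hmain _ rfl (stuck_rule_aux hstuck (DLTrans.t8 F K s q hs hk hq hc))
  · exact hnd hk

lemma stuck_neg {L} {F : DTheory} {K} (hstuck : Stuck L (F, K)) {s : Rule} {q : Lit}
    (hs : s ∈ F.rules) (hnd : s.kind ≠ RuleKind.defeater) (hq : q ∈ s.body)
    (hc : runegTag s.kind q ∈ K) : False := by
  have hmain : ∀ F' : DTheory, F'.rules = F.rules.erase s → F'.rules = F.rules → False := by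
    intro F' he hr
    have hmem := hs
    rw [← hr, he] at hmem
    exact (Finset.mem_erase.mp hmem).1 rfl
  rcases hk : s.kind with _ | _ | _
  · rw [hk] at hc
    exact hmain _ rfl (stuck_rule_aux hstuck (DLTrans.t9 F K s q hs hk hq hc))
  · rw [hk] at hc
    exact hmain _ rfl (stuck_rule_aux hstuck (DLTrans.t10 F K s q hs hk hq hc))
  · exact hnd hk

lemma pos_neg_consis {D E C} (h : TInv D E C) {k : RuleKind} {a : Lit}
    (hk : k ≠ RuleKind.defeater) (hp : ruposTag k a ∈ C) (hm : runegTag k a ∈ C) : False := by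
  cases k with
  | strict => exact delta_consis h hp hm
  | defeasible => exact partial_consis h hp hm
  | defeater => exact hk rfl

lemma stuck_mem {L} {F : DTheory} {K : Set TaggedLit} (hstuck : Stuck L (F, K))
    {x : TaggedLit} (t : DLTrans L (F, K) (F, insert x K)) : x ∈ K := by
  have h : insert x K = K := congrArg Prod.snd (hstuck _ t)
  exact h ▸ Set.mem_insert x K

lemma stuck_union {L} {F : DTheory} {K A : Set TaggedLit} (hstuck : Stuck L (F, K))
    (t : DLTrans L (F, K) (F, K ∪ A)) : A ⊆ K := by
  have h : K ∪ A = K := congrArg Prod.snd (hstuck _ t)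
  exact fun x hx => h ▸ Set.mem_union_right K hx

lemma step_subset {D : DTheory} {L} {F : DTheory} {K : Set TaggedLit} {E C E' C'}
    (hB : D.Basic) (hFK : TInv D F K) (hstuck : Stuck L (F, K)) (hEC : TInv D E C)
    (hsub : C ⊆ K) (t : DLTrans L (E, C) (E', C')) : C' ⊆ K := by
  cases t with
  | t1 _ _ q hqL hcond =>
    refine Set.union_subset hsub (stuck_union hstuck (DLTrans.t1 F K q hqL ?_))
    rcases hcond with hf | ⟨s, hs, hk, hh, hb⟩
    · left; rw [hFK.facts_eq, ← hEC.facts_eq]; exact hf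
    · obtain ⟨r, hr, hk', hh', hsub', hmiss⟩ := hEC.ruleB s hs
      have hrk : r.kind = RuleKind.strict := hk'.symm.trans hk
      have hall : ∀ a ∈ r.body, TaggedLit.pDelta a ∈ K := by
        intro a ha
        have h' := hmiss a ha (by rw [hb]; exact Finset.notMem_empty a)
        rw [hrk] at h'
        exact hsub h'
      rcases hFK.ruleC r hr with ⟨s', hs', hk2, hh2, hsub2, _⟩ | ⟨a, ha, hneg⟩
      · have hs'k : s'.kind = RuleKind.strict := hk2.trans hrk
        have hbody : s'.body = ∅ := by
          by_contra hne
          obtain ⟨a, ha⟩ := Finset.nonempty_iff_ne_empty.mpr hne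
          exact stuck_pos hstuck hs' (by rw [hs'k]; simp) ha
            (by rw [hs'k]; exact hall a (hsub2 ha))
        exact Or.inr ⟨s', hs', hs'k, hh2.trans (hh'.symm.trans hh), hbody⟩
      · rw [hrk] at hneg
        exact (delta_consis hFK (hall a ha) hneg).elim
  | t2 _ _ q hqL hcond =>
    rw [Set.insert_subset_iff]
    refine ⟨stuck_mem hstuck (DLTrans.t2 F K q hqL ?_), hsub⟩
    obtain ⟨s, hs, hk, hh, hb⟩ := hcond
    obtain ⟨r, hr, hk', hh', hsub', hmiss⟩ := hEC.ruleB s hs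
    have hrk : r.kind = RuleKind.defeasible := hk'.symm.trans hk
    have hall : ∀ a ∈ r.body, TaggedLit.pPartial a ∈ K := by
      intro a ha
      have h' := hmiss a ha (by rw [hb]; exact Finset.notMem_empty a)
      rw [hrk] at h'
      exact hsub h'
    rcases hFK.ruleC r hr with ⟨s', hs', hk2, hh2, hsub2, _⟩ | ⟨a, ha, hneg⟩
    · have hs'k : s'.kind = RuleKind.defeasible := hk2.trans hrk
      have hbody : s'.body = ∅ := by
        by_contra hne
        obtain ⟨a, ha⟩ := Finset.nonempty_iff_ne_empty.mpr hne
        exact stuck_pos hstuck hs' (by rw [hs'k]; simp) ha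
          (by rw [hs'k]; exact hall a (hsub2 ha))
      exact ⟨s', hs', hs'k, hh2.trans (hh'.symm.trans hh), hbody⟩
    · rw [hrk] at hneg
      exact (partial_consis hFK (hall a ha) hneg).elim
  | t3 _ _ q hqL hnr hnf =>
    rw [Set.insert_subset_iff]
    refine ⟨stuck_mem hstuck (DLTrans.t3 F K q hqL ?_ ?_), hsub⟩
    · intro s' hs' hbad
      obtain ⟨hk', hh'⟩ := hbad
      obtain ⟨r, hr, hk2, hh2, hsub2, hmiss2⟩ := hFK.ruleB s' hs'
      have hrk : r.kind = RuleKind.strict := hk2.symm.trans hk'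
      have hrh : r.head = q := hh2.symm.trans hh'
      rcases hEC.ruleC r hr with ⟨s₀, hs₀, hk3, hh3, _, _⟩ | ⟨a, ha, hneg⟩
      · exact hnr s₀ hs₀ ⟨hk3.trans hrk, hh3.trans hrh⟩
      · rw [hrk] at hneg
        by_cases hmem : a ∈ s'.body
        · exact stuck_neg hstuck hs' (by rw [hk']; simp) hmem
            (by rw [hk']; exact hsub hneg)
        · have hpos := hmiss2 a ha hmem
          rw [hrk] at hpos
          exact delta_consis hFK hpos (hsub hneg)
    · rw [hFK.facts_eq, ← hEC.facts_eq]; exact hnf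
  | t4 _ _ q hqL hnr =>
    rw [Set.insert_subset_iff]
    refine ⟨stuck_mem hstuck (DLTrans.t4 F K q hqL ?_), hsub⟩
    intro s' hs' hh'
    obtain ⟨r, hr, hk2, hh2, hsub2, hmiss2⟩ := hFK.ruleB s' hs'
    have hrd : r.kind ≠ RuleKind.defeater := hB.1 r hr
    have hrh : r.head = q := hh2.symm.trans hh'
    rcases hEC.ruleC r hr with ⟨s₀, hs₀, _, hh3, _, _⟩ | ⟨a, ha, hneg⟩
    · exact hnr s₀ hs₀ (hh3.trans hrh)
    · by_cases hmem : a ∈ s'.body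
      · exact stuck_neg hstuck hs' (by rw [hk2]; exact hrd) hmem
          (by rw [hk2]; exact hsub hneg)
      · exact pos_neg_consis hFK hrd (hmiss2 a ha hmem) (hsub hneg)
  | t5 _ _ q hqL hcond =>
    rw [Set.insert_subset_iff]
    refine ⟨stuck_mem hstuck (DLTrans.t5 F K q hqL ?_), hsub⟩
    exact hcond.imp (fun x => hsub x) (fun ⟨a, b, c⟩ => ⟨hsub a, hsub b, hsub c⟩)
  | t6 _ _ q hqL hm hcond =>
    rw [Set.insert_subset_iff]
    refine ⟨stuck_mem hstuck (DLTrans.t6 F K q hqL (hsub hm) ?_), hsub⟩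
    exact hcond.imp (fun x => hsub x) (fun x => x.imp (fun y => hsub y) (fun y => hsub y))
  | t7 _ _ s q hs hk hq hc => exact hsub
  | t8 _ _ s q hs hk hq hc => exact hsub
  | t9 _ _ s q hs hk hq hc => exact hsub
  | t10 _ _ s q hs hk hq hc => exact hsub

lemma reach_inv {D : DTheory} {L} {p : DTheory × Set TaggedLit}
    (h : Relation.ReflTransGen (DLTrans L) (D, (∅ : Set TaggedLit)) p) : TInv D p.1 p.2 := by
  induction h with
  | refl => exact inv_init D
  | tail hab hbc ih =>
    rename_i b c
    obtain ⟨E, C⟩ := b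
    obtain ⟨E', C'⟩ := c
    exact inv_step ih hbc

lemma reach_subset {D : DTheory} {L} {F : DTheory} {K : Set TaggedLit} (hB : D.Basic)
    (hFK : TInv D F K) (hstuck : Stuck L (F, K)) {p : DTheory × Set TaggedLit}
    (h : Relation.ReflTransGen (DLTrans L) (D, (∅ : Set TaggedLit)) p) : p.2 ⊆ K := by
  induction h with
  | refl => exact Set.empty_subset K
  | tail hab hbc ih =>
    rename_i b c
    obtain ⟨E, C⟩ := b
    obtain ⟨E', C'⟩ := c
    exact step_subset hB hFK hstuck (reach_inv hab) ih hbc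

end Uniqueness

/-- Uniqueness of the derived conclusion set: if a basic
defeasible theory D with duplicated strict rules (separated reasoning)
derives C₁ and derives C₂, then C₁ = C₂. -/
theorem derived_conclusions_unique (D : DTheory)
    (hBasic : D.Basic) (hDup : D.DupStrictRules)
    (C₁ C₂ : Set TaggedLit) (h1 : Derives D C₁) (h2 : Derives D C₂) :
    C₁ = C₂ := by
  obtain ⟨F1, K1, hr1, hs1, hc1⟩ := h1
  obtain ⟨F2, K2, hr2, hs2, hc2⟩ := h2
  have i1 : TInv D F1 K1 := reach_inv hr1
  have i2 : TInv D F2 K2 := reach_inv hr2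
  have h12 : K1 ⊆ K2 := reach_subset hBasic i2 hs2 hr1
  have h21 : K2 ⊆ K1 := reach_subset hBasic i1 hs1 hr2
  have hK : K1 = K2 := le_antisymm h12 h21
  rw [hc1, hc2, hK]
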